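/- arXiv:0709.0389 — 2 statements merged into one kernel-verified Lean document; each statement's English description precedes it below -/
import Mathlib

section
/- For all integers K ≥ 1, 1 ≤ k ≤ K and N ≥ 1, P( ξ(k,ρ_N^+) ≥ 5N ) ≤ exp( −N/(4K) ). -/
open MeasureTheory ProbabilityTheory Filter
open scoped Classical ENNReal

variable {Ω : Type*} [MeasurableSpace Ω]

/-- The walk `S n = X 1 + ⋯ + X n` built from the steps `X 1, X 2, …`. -/
def walk (X : ℕ → Ω → ℤ) (n : ℕ) (ω : Ω) : ℤ := ∑ i ∈ Finset.range n, X (i + 1) ω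

/-- `X 1, X 2, …` are i.i.d. steps of a simple symmetric random walk:
independent, with `P(X i = 1) = P(X i = -1) = 1/2`. -/
def IsSSRW (P : Measure Ω) (X : ℕ → Ω → ℤ) : Prop :=
  (∀ i, Measurable (X i)) ∧
  iIndepFun X P ∧
  (∀ i, P {ω | X i ω = 1} = 1 / 2 ∧ P {ω | X i ω = -1} = 1 / 2)

/-- Local time `ξ(k,n) = #{i : 1 ≤ i ≤ n, S i = k}` of the walk at site `k` up to time `n`. -/
noncomputable def localTime (X : ℕ → Ω → ℤ) (k : ℤ) (n : ℕ) (ω : Ω) : ℕ :=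
  ((Finset.Icc 1 n).filter fun i => walk X i ω = k).card

/-- `ρ N`, the time of the `N`-th return of the walk to zero (the least time by which the walk
has visited `0` exactly `N` times). -/
noncomputable def rho (X : ℕ → Ω → ℤ) (N : ℕ) (ω : Ω) : ℕ :=
  sInf {n | localTime X 0 n ω = N}

/-- `ξ(k,n,↑)`: the number of upward excursions away from `k` completed up to time `n`,
counted through their endpoints. -/
noncomputable def upCount (X : ℕ → Ω → ℤ) (k : ℤ) (n : ℕ) (ω : Ω) : ℕ :=
  ((Finset.Icc 1 n).filter fun b => ∃ a < b, walk X a ω = k ∧ walk X b ω = k ∧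
      ∀ i, a < i → i < b → k < walk X i ω).card

/-- `ξ(k,n,↓)`: the number of downward excursions away from `k` completed up to time `n`,
counted through their endpoints. -/
noncomputable def downCount (X : ℕ → Ω → ℤ) (k : ℤ) (n : ℕ) (ω : Ω) : ℕ :=
  ((Finset.Icc 1 n).filter fun b => ∃ a < b, walk X a ω = k ∧ walk X b ω = k ∧
      ∀ i, a < i → i < b → walk X i ω < k).card

/-- `ρ⁺ N`, the endpoint of the `N`-th upward excursion of the walk away from `0`. -/
noncomputable def rhoPlus (X : ℕ → Ω → ℤ) (N : ℕ) (ω : Ω) : ℕ :=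
  sInf {n | upCount X 0 n ω = N}

/-- `τ_i^{(k)}`: `τ_0^{(k)} = 0` and
`τ_i^{(k)} = min {j > τ_{i-1}^{(k)} : S (j-1) = k, S j = k - 1}`. -/
noncomputable def tauRW (X : ℕ → Ω → ℤ) (k : ℤ) : ℕ → Ω → ℕ
  | 0 => fun _ => 0
  | i + 1 => fun ω =>
      sInf {j | tauRW X k i ω < j ∧ walk X (j - 1) ω = k ∧ walk X j ω = k - 1}

/-- `T_i^{(k)} = ξ(k, τ_i^{(k)}) − ξ(k, τ_{i-1}^{(k)})`. -/
noncomputable def T (X : ℕ → Ω → ℤ) (k : ℤ) (i : ℕ) (ω : Ω) : ℕ :=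
  localTime X k (tauRW X k i ω) ω - localTime X k (tauRW X k (i - 1) ω) ω

/-- `U^{(k)}(j) = T_1^{(k)} + ⋯ + T_j^{(k)} − 2 j`. -/
noncomputable def U (X : ℕ → Ω → ℤ) (k : ℤ) (j : ℕ) (ω : Ω) : ℤ :=
  (∑ i ∈ Finset.Icc 1 j, (T X k i ω : ℤ)) - 2 * (j : ℤ)

/-- `κ n = max {i ≤ n : S i = 0}`, the last zero of the walk up to time `n`. -/
noncomputable def kappa (X : ℕ → Ω → ℤ) (n : ℕ) (ω : Ω) : ℕ :=
  sSup {i | i ≤ n ∧ walk X i ω = 0}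

set_option linter.unusedSectionVars false

/-!
With `U n` the number of upward excursions away from `0` completed by time `n`, the process
`exp (ξ(k,n)/(4k) - U n/k) · g (S n)` is a nonnegative supermartingale for a suitable profile `g`
equal to `1` on `(-∞, 0]`: it is a function of the Markov chain `(S n, ξ(k,n), U n)`, and the
weight is superharmonic for the chain's one-step transition. Stopped at `ρ_N⁺` it therefore has
expectation at most its initial value `1`. At `ρ_N⁺` the walk is at `0` and `U = N`, so on the event
`ξ(k, ρ_N⁺) ≥ 5N` the stopped process ends above `exp (5N/(4k) - N/k) = exp (N/(4k))`; Fatou's lemma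
and Markov's inequality give the bound `exp (-N/(4k)) ≤ exp (-N/(4K))`.
-/

section

variable {X : ℕ → Ω → ℤ} {ω : Ω}

lemma walk_zero : walk X 0 ω = 0 := by simp [walk]

lemma walk_succ (n : ℕ) : walk X (n + 1) ω = walk X n ω + X (n + 1) ω :=
  Finset.sum_range_succ _ _

lemma localTime_zero (k : ℤ) : localTime X k 0 ω = 0 := by simp [localTime]

lemma localTime_succ (k : ℤ) (n : ℕ) :
    localTime X k (n + 1) ω = localTime X k n ω + if walk X (n + 1) ω = k then 1 else 0 := by
  simp only [localTime, Finset.card_filter]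
  exact Finset.sum_Icc_succ_top (by omega) _

lemma upCount_zero : upCount X 0 0 ω = 0 := by simp [upCount]

lemma walk_pos_of_ne_zero (hs : ∀ i, X i ω = 1 ∨ X i ω = -1) {a m : ℕ}
    (hne : ∀ j, a < j → j ≤ m → walk X j ω ≠ 0) (hm : 0 < walk X m ω) {i : ℕ} (hai : a < i)
    (him : i ≤ m) : 0 < walk X i ω := by
  induction him using Nat.decreasingInduction with
  | self => exact hm
  | of_succ j hjm ih =>
    have := walk_succ (X := X) (ω := ω) j
    have := hne j hai hjm.le
    rcases hs (j + 1) with h | h <;> omega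

lemma upCount_succ (hs : ∀ i, X i ω = 1 ∨ X i ω = -1) (n : ℕ) :
    upCount X 0 (n + 1) ω =
      upCount X 0 n ω + if walk X n ω = 1 ∧ walk X (n + 1) ω = 0 then 1 else 0 := by
  have hstep := walk_succ (X := X) (ω := ω) n
  have hiff : (∃ a < n + 1, walk X a ω = 0 ∧ walk X (n + 1) ω = 0 ∧
      ∀ i, a < i → i < n + 1 → 0 < walk X i ω) ↔ walk X n ω = 1 ∧ walk X (n + 1) ω = 0 := by
    constructor
    · rintro ⟨a, ha, ha0, hb0, hpos⟩
      rcases (show a < n ∨ a = n by omega) with han | rfl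
      · have := hpos n han (by omega)
        rcases hs (n + 1) with h | h <;> omega
      · rcases hs (a + 1) with h | h <;> omega
    · rintro ⟨hn1, hb0⟩
      let a := Nat.findGreatest (fun a => walk X a ω = 0) n
      have ha0 : walk X a ω = 0 :=
        Nat.findGreatest_spec (P := fun a => walk X a ω = 0) (Nat.zero_le n) walk_zero
      have han : a ≤ n := Nat.findGreatest_le n
      have hne : ∀ j, a < j → j ≤ n → walk X j ω ≠ 0 :=
        fun j hj hjn => Nat.findGreatest_is_greatest hj hjn
      refine ⟨a, by omega, ha0, hb0, fun i hai hin => ?_⟩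
      exact walk_pos_of_ne_zero hs hne (by omega) hai (by omega)
  simp only [upCount, Finset.card_filter]
  rw [Finset.sum_Icc_succ_top (by omega)]
  simp only [hiff]

/-- One step of the state (position, local time at `k`, completed upward excursions away from `0`)
when the walk moves by `s`. -/
def walkStep (k : ℤ) (z : ℤ × ℕ × ℕ) (s : ℤ) : ℤ × ℕ × ℕ :=
  (z.1 + s, z.2.1 + if z.1 + s = k then 1 else 0,
    z.2.2 + if z.1 = 1 ∧ z.1 + s = 0 then 1 else 0)

noncomputable def walkState (X : ℕ → Ω → ℤ) (k : ℤ) (n : ℕ) (ω : Ω) : ℤ × ℕ × ℕ :=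
  (walk X n ω, localTime X k n ω, upCount X 0 n ω)

lemma walkState_zero (k : ℤ) : walkState X k 0 ω = (0, 0, 0) := by
  simp [walkState, walk_zero, localTime_zero, upCount_zero]

lemma walkState_succ (hs : ∀ i, X i ω = 1 ∨ X i ω = -1) (k : ℤ) (n : ℕ) :
    walkState X k (n + 1) ω = walkStep k (walkState X k n ω) (X (n + 1) ω) := by
  simp only [walkState, walkStep, localTime_succ, upCount_succ hs, walk_succ]
  congr

def stepChain {α : Type*} (F : α → ℤ → α) (z₀ : α) (x : ℕ → ℤ) : ℕ → α
  | 0 => z₀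
  | n + 1 => F (stepChain F z₀ x n) (x (n + 1))

def stoppedWalkStep (k : ℤ) (N : ℕ) (z : ℤ × ℕ × ℕ) (s : ℤ) : ℤ × ℕ × ℕ :=
  if z.2.2 = N then z else walkStep k z s

lemma upCount_ne_of_lt_rhoPlus {N n : ℕ} (hn : n < rhoPlus X N ω) : upCount X 0 n ω ≠ N :=
  Nat.notMem_of_lt_sInf (s := {n | upCount X 0 n ω = N}) hn

-- `rhoPlus` is the junk value `0` when the walk never completes `N` upward excursions.
lemma upCount_rhoPlus {k : ℤ} {N : ℕ} (h : N ≤ localTime X k (rhoPlus X N ω) ω) :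
    upCount X 0 (rhoPlus X N ω) ω = N := by
  by_cases hne : {n | upCount X 0 n ω = N}.Nonempty
  · exact Nat.sInf_mem hne
  · have h0 : rhoPlus X N ω = 0 := by
      simp [rhoPlus, Set.not_nonempty_iff_eq_empty.1 hne]
    rw [h0, localTime_zero] at h
    rw [h0, upCount_zero]
    omega

lemma walk_rhoPlus (hs : ∀ i, X i ω = 1 ∨ X i ω = -1) {N : ℕ}
    (hρ : upCount X 0 (rhoPlus X N ω) ω = N) : walk X (rhoPlus X N ω) ω = 0 := by
  cases hm : rhoPlus X N ω with
  | zero => exact walk_zero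
  | succ m =>
    have hmN := upCount_ne_of_lt_rhoPlus (show m < rhoPlus X N ω by omega)
    rw [hm, upCount_succ hs] at hρ
    by_contra h
    rw [if_neg (fun hc => h hc.2)] at hρ
    exact hmN (by omega)

lemma stepChain_stoppedWalkStep_of_le_rhoPlus (hs : ∀ i, X i ω = 1 ∨ X i ω = -1) (k : ℤ)
    {N n : ℕ} (hn : n ≤ rhoPlus X N ω) :
    stepChain (stoppedWalkStep k N) (0, 0, 0) (X · ω) n = walkState X k n ω := by
  induction n with
  | zero => exact (walkState_zero k).symm
  | succ n ih =>
    rw [stepChain, ih (by omega), walkState_succ hs, stoppedWalkStep,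
      if_neg (by exact upCount_ne_of_lt_rhoPlus (by omega))]

lemma stepChain_stoppedWalkStep_of_rhoPlus_le (hs : ∀ i, X i ω = 1 ∨ X i ω = -1) (k : ℤ)
    {N n : ℕ} (hρ : upCount X 0 (rhoPlus X N ω) ω = N) (hn : rhoPlus X N ω ≤ n) :
    stepChain (stoppedWalkStep k N) (0, 0, 0) (X · ω) n = walkState X k (rhoPlus X N ω) ω := by
  induction n, hn using Nat.le_induction with
  | base => exact stepChain_stoppedWalkStep_of_le_rhoPlus hs k le_rfl
  | succ n _ ih => rw [stepChain, ih, stoppedWalkStep, if_pos (by exact hρ)]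

def DependsOnSteps (X : ℕ → Ω → ℤ) (n : ℕ) {α : Type*} (F : Ω → α) : Prop :=
  ∀ ω ω', (∀ i ∈ Finset.Icc 1 n, X i ω = X i ω') → F ω = F ω'

section DependsOnSteps

variable {n : ℕ} {α β : Type*} {F : Ω → α}

lemma DependsOnSteps.comp (g : α → β) (h : DependsOnSteps X n F) :
    DependsOnSteps X n fun ω => g (F ω) :=
  fun ω ω' hω => congrArg g (h ω ω' hω)

lemma dependsOnSteps_stepChain (F : α → ℤ → α) (z₀ : α) (n : ℕ) :
    DependsOnSteps X n fun ω => stepChain F z₀ (X · ω) n := by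
  induction n with
  | zero => exact fun _ _ _ => rfl
  | succ n ih =>
    intro ω ω' hω
    have hω' : ∀ i ∈ Finset.Icc 1 n, X i ω = X i ω' := fun i hi =>
      hω i (Finset.Icc_subset_Icc_right n.le_succ hi)
    simp only [stepChain, ih ω ω' hω', hω (n + 1) (by simp)]

lemma DependsOnSteps.exists_eq_comp [Nonempty α] (h : DependsOnSteps X n F) :
    ∃ φ : (Finset.Icc 1 n → ℤ) → α, ∀ ω, F ω = φ fun i : Finset.Icc 1 n => X i ω := by
  refine ⟨fun v => if hv : ∃ ω, (fun i : Finset.Icc 1 n => X i ω) = v then F hv.choose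
    else Classical.arbitrary α, fun ω => ?_⟩
  have hv : ∃ ω', (fun i : Finset.Icc 1 n => X i ω') = fun i : Finset.Icc 1 n => X i ω :=
    ⟨ω, rfl⟩
  dsimp only
  rw [dif_pos hv]
  exact h _ _ fun i hi => (congrFun hv.choose_spec ⟨i, hi⟩).symm

lemma DependsOnSteps.measurable [MeasurableSpace α] [Nonempty α] (hX : ∀ i, Measurable (X i))
    (h : DependsOnSteps X n F) : Measurable F := by
  obtain ⟨φ, hφ⟩ := h.exists_eq_comp
  rw [funext hφ]
  exact (measurable_of_countable φ).comp (measurable_pi_lambda _ fun i => hX i)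

end DependsOnSteps

namespace IsSSRW

variable {P : Measure Ω} {n : ℕ}

lemma ae_step_eq_one_or_neg_one [IsProbabilityMeasure P] (hX : IsSSRW P X) :
    ∀ᵐ ω ∂P, ∀ i, X i ω = 1 ∨ X i ω = -1 := by
  refine ae_all_iff.2 fun i => ?_
  have hpos : MeasurableSet {ω | X i ω = 1} := hX.1 i (measurableSet_singleton 1)
  have hneg : MeasurableSet {ω | X i ω = -1} := hX.1 i (measurableSet_singleton (-1))
  have hdisj : Disjoint {ω | X i ω = 1} {ω | X i ω = -1} :=
    Set.disjoint_left.2 fun ω h1 h2 => by simp_all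
  change {ω | X i ω = 1} ∪ {ω | X i ω = -1} ∈ ae P
  rw [mem_ae_iff, prob_compl_eq_zero_iff (hpos.union hneg), measure_union hdisj hneg,
    (hX.2.2 i).1, (hX.2.2 i).2, ENNReal.add_halves]

lemma lintegral_mul_indicator_step (hX : IsSSRW P X) {F : Ω → ℝ≥0∞} (hF : DependsOnSteps X n F)
    (s : ℤ) :
    ∫⁻ ω, F ω * {ω | X (n + 1) ω = s}.indicator 1 ω ∂P
      = P {ω | X (n + 1) ω = s} * ∫⁻ ω, F ω ∂P := by
  obtain ⟨φ, hφ⟩ := hF.exists_eq_comp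
  let G : Ω → ℝ≥0∞ := {ω | X (n + 1) ω = s}.indicator 1
  have hind : IndepFun F G P := by
    have hdisj : Disjoint (Finset.Icc 1 n) {n + 1} := by simp
    convert (hX.2.1.indepFun_finset _ _ hdisj hX.1).comp (measurable_of_countable φ)
      (measurable_of_countable fun v : ({n + 1} : Finset ℕ) → ℤ =>
        ({s} : Set ℤ).indicator (1 : ℤ → ℝ≥0∞) (v ⟨n + 1, Finset.mem_singleton_self _⟩)) using 1
    · exact funext hφ
    · funext ω
      simp [G, Set.indicator]
  have hmeas : MeasurableSet {ω | X (n + 1) ω = s} := hX.1 _ (measurableSet_singleton s)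
  rw [show (fun ω => F ω * G ω) = F * G from rfl,
    lintegral_mul_eq_lintegral_mul_lintegral_of_indepFun (hF.measurable hX.1)
      (measurable_one.indicator hmeas) hind, lintegral_indicator_one hmeas, mul_comm]

lemma lintegral_comp_step [IsProbabilityMeasure P] (hX : IsSSRW P X) {Φ : ℤ → Ω → ℝ≥0∞}
    (hΦ : ∀ s, DependsOnSteps X n (Φ s)) :
    ∫⁻ ω, Φ (X (n + 1) ω) ω ∂P = (∫⁻ ω, Φ 1 ω ∂P + ∫⁻ ω, Φ (-1) ω ∂P) / 2 := by
  have hae : (fun ω => Φ (X (n + 1) ω) ω) =ᵐ[P] fun ω =>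
      Φ 1 ω * {ω | X (n + 1) ω = 1}.indicator 1 ω
        + Φ (-1) ω * {ω | X (n + 1) ω = -1}.indicator 1 ω := by
    filter_upwards [hX.ae_step_eq_one_or_neg_one] with ω hω
    rcases hω (n + 1) with h | h <;> simp [Set.indicator, h]
  have hmeas : Measurable fun ω => Φ 1 ω * {ω | X (n + 1) ω = 1}.indicator 1 ω :=
    ((hΦ 1).measurable hX.1).mul (measurable_one.indicator (hX.1 _ (measurableSet_singleton 1)))
  rw [lintegral_congr_ae hae, lintegral_add_left hmeas, hX.lintegral_mul_indicator_step (hΦ 1),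
    hX.lintegral_mul_indicator_step (hΦ (-1)), (hX.2.2 _).1, (hX.2.2 _).2, ← mul_add, one_div,
    ENNReal.div_eq_inv_mul]

lemma lintegral_stepChain_le [IsProbabilityMeasure P] (hX : IsSSRW P X) {α : Type*}
    {F : α → ℤ → α} {h : α → ℝ≥0∞} (hh : ∀ z, h (F z 1) + h (F z (-1)) ≤ 2 * h z) (z₀ : α)
    (n : ℕ) : ∫⁻ ω, h (stepChain F z₀ (X · ω) n) ∂P ≤ h z₀ := by
  induction n with
  | zero => simp [stepChain]
  | succ n ih =>
    let Z := fun ω => stepChain F z₀ (X · ω) n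
    have hdep : DependsOnSteps X n Z := dependsOnSteps_stepChain F z₀ n
    calc ∫⁻ ω, h (stepChain F z₀ (X · ω) (n + 1)) ∂P
        = (∫⁻ ω, h (F (Z ω) 1) ∂P + ∫⁻ ω, h (F (Z ω) (-1)) ∂P) / 2 :=
          hX.lintegral_comp_step fun s => hdep.comp fun z => h (F z s)
      _ = (∫⁻ ω, (h (F (Z ω) 1) + h (F (Z ω) (-1))) ∂P) / 2 := by
          rw [lintegral_add_left (f := fun ω => h (F (Z ω) 1))
            ((hdep.comp fun z => h (F z 1)).measurable hX.1)]
      _ ≤ (∫⁻ ω, 2 * h (Z ω) ∂P) / 2 := by gcongr with ω; exact hh _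
      _ = ∫⁻ ω, h (Z ω) ∂P := by
          rw [lintegral_const_mul' _ _ ENNReal.ofNat_ne_top,
            mul_comm, ENNReal.mul_div_cancel_right two_ne_zero ENNReal.ofNat_ne_top]
      _ ≤ h z₀ := ih

end IsSSRW

section Weight

variable {k : ℕ}

/-- Affine on `[0, k]`, where averaging over the next step is then exact, and constant beyond `k`;
its value `exp (-1/k)` just above `0` pays for closing an excursion from `1`. -/
noncomputable def arrivalWeight (k : ℕ) (y : ℤ) : ℝ :=
  if y ≤ 0 then 1 else Real.exp (-1 / k) * (1 + ((min y k : ℤ) : ℝ) / k)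

lemma arrivalWeight_of_nonpos {y : ℤ} (hy : y ≤ 0) : arrivalWeight k y = 1 := if_pos hy

lemma arrivalWeight_of_pos {y : ℤ} (hy : 0 < y) :
    arrivalWeight k y = Real.exp (-1 / k) * (1 + ((min y k : ℤ) : ℝ) / k) := if_neg (not_le.2 hy)

lemma arrivalWeight_nonneg (y : ℤ) : 0 ≤ arrivalWeight k y := by
  rcases le_or_gt y 0 with hy | hy
  · rw [arrivalWeight_of_nonpos hy]; exact zero_le_one
  · have : (0 : ℝ) ≤ ((min y k : ℤ) : ℝ) := by exact_mod_cast le_min hy.le (Int.natCast_nonneg k)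
    rw [arrivalWeight_of_pos hy]
    positivity

lemma exp_mul_arrivalWeight_sub_one {x : ℤ} (hx : 1 ≤ x) :
    Real.exp (-(if x = 1 then 1 else 0) / k) * arrivalWeight k (x - 1)
      = Real.exp (-1 / k) * (1 + ((min (x - 1) k : ℤ) : ℝ) / k) := by
  rcases eq_or_lt_of_le hx with rfl | hx1
  · rw [if_pos rfl, sub_self, arrivalWeight_of_nonpos le_rfl, min_eq_left (by omega)]
    simp
  · rw [if_neg hx1.ne', arrivalWeight_of_pos (by omega)]
    simp

/-- The factor `exp (-1/k)` charges a completed upward excursion; `exp (-1/(4k))` discounts the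
visit to `k` that `expWeight` has already counted. -/
lemma arrivalWeight_step_le (hk : 1 ≤ k) (x : ℤ) :
    arrivalWeight k (x + 1)
        + Real.exp (-(if x = 1 then 1 else 0) / k) * arrivalWeight k (x - 1)
      ≤ 2 * Real.exp (-(if x = k then 1 else 0) / (4 * k)) * arrivalWeight k x := by
  have hkR : (1 : ℝ) ≤ k := by exact_mod_cast hk
  set a := Real.exp (-1 / k) with ha
  have ha0 : 0 < a := Real.exp_pos _
  rcases lt_trichotomy x 0 with hx | rfl | hx
  · rw [arrivalWeight_of_nonpos (by omega), arrivalWeight_of_nonpos (by omega),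
      arrivalWeight_of_nonpos hx.le, if_neg (by omega), if_neg (by omega)]
    norm_num
  · have hsmall : a * (1 + 1 / k) ≤ 1 :=
      calc a * (1 + 1 / k) ≤ a * Real.exp (1 / k) := by
            gcongr; linarith [Real.add_one_le_exp (1 / (k : ℝ))]
        _ = 1 := by rw [ha, ← Real.exp_add]; ring_nf; exact Real.exp_zero
    rw [arrivalWeight_of_pos (by norm_num), arrivalWeight_of_nonpos (by norm_num),
      arrivalWeight_of_nonpos le_rfl, if_neg (by norm_num), if_neg (by omega),
      min_eq_left (by omega), ← ha]
    simp only [zero_add, Int.cast_one, neg_zero, zero_div, Real.exp_zero]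
    linarith
  rw [exp_mul_arrivalWeight_sub_one hx, arrivalWeight_of_pos (by omega),
    arrivalWeight_of_pos hx, ← ha]
  rcases lt_trichotomy x k with hxk | rfl | hxk
  · rw [if_neg hxk.ne, min_eq_left (by omega), min_eq_left (by omega), min_eq_left hxk.le]
    apply le_of_eq
    push_cast
    simp only [neg_zero, zero_div, Real.exp_zero]
    ring
  · have hk0 : (k : ℝ) ≠ 0 := by positivity
    have hdisc : a * (4 - 1 / k) ≤ a * (4 * Real.exp (-1 / (4 * k))) := by
      have := Real.one_sub_le_exp_neg (1 / (4 * k))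
      rw [← neg_div] at this
      gcongr
      linarith [show (1 : ℝ) / k = 4 * (1 / (4 * k)) by field_simp]
    rw [if_pos rfl, min_eq_right (by omega), min_eq_left (by omega), min_self]
    push_cast
    calc a * (1 + k / k) + a * (1 + (k - 1) / k) = a * (4 - 1 / k) := by field_simp; ring
      _ ≤ a * (4 * Real.exp (-1 / (4 * k))) := hdisc
      _ = 2 * Real.exp (-1 / (4 * k)) * (a * (1 + k / k)) := by field_simp; ring
  · rw [if_neg hxk.ne', min_eq_right (by omega), min_eq_right (by omega),
      min_eq_right hxk.le]
    simp only [neg_zero, zero_div, Real.exp_zero]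
    linarith

/-- `z.2.1 - [z.1 = k]` counts the visits to `k` strictly before the current time, so a step changes
the weight only through `arrivalWeight` of the new position and the excursion charge. -/
noncomputable def expWeight (k : ℕ) (z : ℤ × ℕ × ℕ) : ℝ≥0∞ :=
  ENNReal.ofReal (Real.exp (((z.2.1 : ℝ) - if z.1 = k then 1 else 0) / (4 * k) - z.2.2 / k)
    * arrivalWeight k z.1)

lemma expWeight_zero : expWeight k (0, 0, 0) = 1 := by
  simp [expWeight, arrivalWeight]
  omega

lemma expWeight_eq (z : ℤ × ℕ × ℕ) :
    expWeight k z = ENNReal.ofReal (Real.exp (z.2.1 / (4 * k) - z.2.2 / k)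
      * (Real.exp (-(if z.1 = k then 1 else 0) / (4 * k)) * arrivalWeight k z.1)) := by
  rw [expWeight, ← mul_assoc, ← Real.exp_add]
  congr 3
  ring

lemma expWeight_walkStep (z : ℤ × ℕ × ℕ) (s : ℤ) :
    expWeight k (walkStep k z s) = ENNReal.ofReal (Real.exp (z.2.1 / (4 * k) - z.2.2 / k)
      * (Real.exp (-(if z.1 = 1 ∧ z.1 + s = 0 then 1 else 0) / k)
        * arrivalWeight k (z.1 + s))) := by
  rw [expWeight, walkStep, ← mul_assoc, ← Real.exp_add]
  congr 3
  push_cast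
  split_ifs <;> ring

lemma expWeight_walkStep_add_le (hk : 1 ≤ k) (z : ℤ × ℕ × ℕ) :
    expWeight k (walkStep k z 1) + expWeight k (walkStep k z (-1)) ≤ 2 * expWeight k z := by
  have hup : ¬(z.1 = 1 ∧ z.1 + 1 = 0) := by omega
  have hdown : (z.1 = 1 ∧ z.1 - 1 = 0) ↔ z.1 = 1 := by omega
  rw [expWeight_walkStep, expWeight_walkStep, expWeight_eq, if_neg hup, ← sub_eq_add_neg]
  simp only [hdown, neg_zero, zero_div, Real.exp_zero, one_mul]
  have hE := (Real.exp_pos (z.2.1 / (4 * k) - z.2.2 / k)).le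
  have hnn := arrivalWeight_nonneg (k := k)
  rw [← ENNReal.ofReal_add (mul_nonneg hE (hnn _))
      (mul_nonneg hE (mul_nonneg (Real.exp_pos _).le (hnn _))),
    ← ENNReal.ofReal_ofNat 2, ← ENNReal.ofReal_mul zero_le_two]
  apply ENNReal.ofReal_le_ofReal
  have := mul_le_mul_of_nonneg_left (arrivalWeight_step_le hk z.1) hE
  linarith

lemma expWeight_stoppedWalkStep_add_le (hk : 1 ≤ k) (N : ℕ) (z : ℤ × ℕ × ℕ) :
    expWeight k (stoppedWalkStep k N z 1) + expWeight k (stoppedWalkStep k N z (-1))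
      ≤ 2 * expWeight k z := by
  unfold stoppedWalkStep
  split_ifs
  · rw [two_mul]
  · exact expWeight_walkStep_add_le hk z

lemma ofReal_exp_le_expWeight (hk : 1 ≤ k) {ξ N : ℕ} (h : 5 * N ≤ ξ) :
    ENNReal.ofReal (Real.exp (N / (4 * k))) ≤ expWeight k (0, ξ, N) := by
  have hk0 : (0 : ℤ) ≠ k := by omega
  rw [expWeight, if_neg hk0, arrivalWeight_of_nonpos le_rfl, mul_one]
  apply ENNReal.ofReal_le_ofReal
  apply Real.exp_le_exp.2
  have hkR : (0 : ℝ) < k := by exact_mod_cast hk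
  have hξ : (5 * N : ℝ) ≤ ξ := by exact_mod_cast h
  have hN : (N : ℝ) / (4 * k) = 5 * N / (4 * k) - N / k := by field_simp; ring
  dsimp only
  rw [sub_zero, hN]
  gcongr

end Weight

lemma ofReal_exp_le_liminf_expWeight {k N : ℕ} (hk : 1 ≤ k)
    (hs : ∀ i, X i ω = 1 ∨ X i ω = -1) (h : 5 * N ≤ localTime X k (rhoPlus X N ω) ω) :
    ENNReal.ofReal (Real.exp (N / (4 * k))) ≤
      liminf (fun n => expWeight k (stepChain (stoppedWalkStep k N) (0, 0, 0) (X · ω) n))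
        atTop := by
  have hρ := upCount_rhoPlus (by omega : N ≤ localTime X k (rhoPlus X N ω) ω)
  have hlim : ∀ n ≥ rhoPlus X N ω,
      expWeight k (stepChain (stoppedWalkStep k N) (0, 0, 0) (X · ω) n)
        = expWeight k (0, localTime X k (rhoPlus X N ω) ω, N) := by
    intro n hn
    rw [stepChain_stoppedWalkStep_of_rhoPlus_le hs k hρ hn, walkState, walk_rhoPlus hs hρ, hρ]
  rw [(tendsto_atTop_of_eventually_const hlim).liminf_eq]
  exact ofReal_exp_le_expWeight hk h

lemma meas_liminf_ge_le_div {α : Type*} [MeasurableSpace α] {μ : Measure α}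
    {f : ℕ → α → ℝ≥0∞} (hf : ∀ n, Measurable (f n)) {C : ℝ≥0∞} (hC : ∀ n, ∫⁻ x, f n x ∂μ ≤ C)
    {c : ℝ≥0∞} (hc : c ≠ 0) (hc' : c ≠ ∞) :
    μ {x | c ≤ liminf (fun n => f n x) atTop} ≤ C / c := by
  refine (meas_ge_le_lintegral_div (Measurable.liminf hf).aemeasurable hc hc').trans ?_
  gcongr
  calc ∫⁻ x, liminf (fun n => f n x) atTop ∂μ ≤ liminf (fun n => ∫⁻ x, f n x ∂μ) atTop :=
        lintegral_liminf_le hf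
    _ ≤ C := liminf_le_of_le ⟨0, by simp⟩ fun b hb => by
        obtain ⟨n, hn⟩ := hb.exists
        exact hn.trans (hC n)

end

theorem statement7_general (P : Measure Ω) [IsProbabilityMeasure P] (X : ℕ → Ω → ℤ)
    (hX : IsSSRW P X) (K : ℕ) (k : ℕ) (hk1 : 1 ≤ k) (hkK : k ≤ K)
    (N : ℕ) :
    P {ω | 5 * N ≤ localTime X (k : ℤ) (rhoPlus X N ω) ω}
      ≤ ENNReal.ofReal (Real.exp (-(N : ℝ) / (4 * (K : ℝ)))) := by
  let c := ENNReal.ofReal (Real.exp (N / (4 * k)))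
  let Z n ω := stepChain (stoppedWalkStep k N) (0, 0, 0) (X · ω) n
  have hZ : ∀ n, ∫⁻ ω, expWeight k (Z n ω) ∂P ≤ 1 := fun n =>
    (hX.lintegral_stepChain_le (expWeight_stoppedWalkStep_add_le hk1 N) _ n).trans_eq expWeight_zero
  have hevent : ∀ᵐ ω ∂P, 5 * N ≤ localTime X k (rhoPlus X N ω) ω →
      c ≤ liminf (fun n => expWeight k (Z n ω)) atTop := by
    filter_upwards [hX.ae_step_eq_one_or_neg_one] with ω hs hω
    exact ofReal_exp_le_liminf_expWeight hk1 hs hω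
  have hc : c ≠ 0 := (ENNReal.ofReal_pos.2 (Real.exp_pos _)).ne'
  calc P {ω | 5 * N ≤ localTime X (k : ℤ) (rhoPlus X N ω) ω}
      ≤ P {ω | c ≤ liminf (fun n => expWeight k (Z n ω)) atTop} := measure_mono_ae hevent
    _ ≤ 1 / c := meas_liminf_ge_le_div
        (fun n => ((dependsOnSteps_stepChain _ _ n).comp (expWeight k)).measurable hX.1) hZ hc
        ENNReal.ofReal_ne_top
    _ = ENNReal.ofReal (Real.exp (-(N / (4 * k)))) := by
        rw [one_div, ← ENNReal.ofReal_inv_of_pos (Real.exp_pos _), ← Real.exp_neg]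
    _ ≤ ENNReal.ofReal (Real.exp (-(N : ℝ) / (4 * (K : ℝ)))) := by
        have hkR : (1 : ℝ) ≤ k := by exact_mod_cast hk1
        have hkK' : (k : ℝ) ≤ K := by exact_mod_cast hkK
        gcongr
        rw [neg_div]
        gcongr

/-- For all integers `K ≥ 1`, `1 ≤ k ≤ K` and `N ≥ 1`,
`P(ξ(k, ρ_N⁺) ≥ 5N) ≤ exp(−N/(4K))`. -/
theorem statement7 (P : Measure Ω) [IsProbabilityMeasure P] (X : ℕ → Ω → ℤ)
    (hX : IsSSRW P X) (K : ℕ) (hK : 1 ≤ K) (k : ℕ) (hk1 : 1 ≤ k) (hkK : k ≤ K)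
    (N : ℕ) (hN : 1 ≤ N) :
    P {ω | 5 * N ≤ localTime X (k : ℤ) (rhoPlus X N ω) ω}
      ≤ ENNReal.ofReal (Real.exp (-(N : ℝ) / (4 * (K : ℝ)))) :=
  statement7_general P X hX K k hk1 hkK N
end

section
/- Let Y_1, Y_2, ... be i.i.d. random variables with the exponential distribution of parameter 1. Then for every integer n ≥ 1 and every real u with 0 < u < 2√n, P( max_{1≤j≤n} |Σ_{i=1}^j (Y_i − 1)| ≥ u√n ) ≤ 2 exp( −u²/8 ). -/
/-!
For `t ≤ 1/2` the centred exponential variable has `E e^{t(Y-1)} = e^{-t}/(1-t) ∈ [1, e^{2t²}]`,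
so `exp (t Sⱼ)` is a nonnegative submartingale for the partial sums `Sⱼ`, and Doob's maximal
inequality gives `P(max_{j ≤ n} t Sⱼ ≥ a) ≤ e^{2nt² - a}`. The choice `t = ±u/(4√n)`, admissible
because `u < 2√n`, and `a = u²/4` bounds each of the two one-sided events by `e^{-u²/8}`.
-/

open MeasureTheory ProbabilityTheory Real Set
open scoped ENNReal

variable {Ω : Type*} [MeasurableSpace Ω]

lemma Real.one_le_exp_neg_mul_inv_one_sub {t : ℝ} (ht : t < 1) : 1 ≤ exp (-t) * (1 - t)⁻¹ := by
  rw [← div_eq_mul_inv, one_le_div₀ (by linarith)]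
  linarith [add_one_le_exp (-t)]

lemma Real.exp_neg_mul_inv_one_sub_le {t : ℝ} (ht : t ≤ 1 / 2) :
    exp (-t) * (1 - t)⁻¹ ≤ exp (2 * t ^ 2) := by
  rw [← div_eq_mul_inv, div_le_iff₀ (by linarith)]
  -- `(1 + t + 2t²)(1 - t) = 1 + t²(1 - 2t) ≥ 1`
  have hpoly : 1 ≤ (1 + (t + 2 * t ^ 2)) * (1 - t) := by nlinarith [sq_nonneg t]
  calc exp (-t) ≤ exp (-t) * ((1 + (t + 2 * t ^ 2)) * (1 - t)) :=
        le_mul_of_one_le_right (exp_pos _).le hpoly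
    _ ≤ exp (-t) * (exp (t + 2 * t ^ 2) * (1 - t)) := by
        gcongr
        · linarith
        · exact add_one_le_exp _ |>.trans_eq' (add_comm _ _)
    _ = exp (2 * t ^ 2) * (1 - t) := by rw [← mul_assoc, ← exp_add]; ring_nf

namespace ProbabilityTheory

lemma integral_expMeasure {r : ℝ} (hr : 0 ≤ r) (f : ℝ → ℝ) :
    ∫ y, f y ∂expMeasure r = ∫ y in Ioi 0, r * exp (-(r * y)) * f y := by
  have hpdf : ∀ y, (exponentialPDF r y).toReal = if 0 ≤ y then r * exp (-(r * y)) else 0 := by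
    intro y
    rw [exponentialPDF_eq, ENNReal.toReal_ofReal]
    split_ifs <;> positivity
  rw [← integral_Ici_eq_integral_Ioi, ← integral_indicator measurableSet_Ici]
  change ∫ y, f y ∂volume.withDensity (exponentialPDF r) = _
  rw [integral_withDensity_eq_integral_toReal_smul (f := exponentialPDF r)
    (measurable_exponentialPDFReal r).ennreal_ofReal (ae_of_all _ fun _ => ENNReal.ofReal_lt_top)]
  congr 1 with y
  by_cases hy : 0 ≤ y <;> simp [hpdf, hy, indicator]

lemma mgf_id_expMeasure {r t : ℝ} (hr : 0 ≤ r) (ht : t < r) :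
    mgf id (expMeasure r) t = r / (r - t) := by
  have hexp : ∀ y, r * exp (-(r * y)) * exp (t * id y) = r * exp ((t - r) * y) := by
    intro y
    rw [mul_assoc, ← exp_add, id]
    ring_nf
  rw [mgf, integral_expMeasure hr]
  simp_rw [hexp]
  rw [integral_const_mul, integral_exp_mul_Ioi (by linarith), mul_zero, exp_zero,
    ← neg_sub, div_neg, neg_div, neg_neg, mul_one_div]

lemma mgf_sub_one_of_map_eq_expMeasure_one {P : Measure Ω} {Y : Ω → ℝ} (hY : Measurable Y)
    (hdist : P.map Y = expMeasure 1) {t : ℝ} (ht : t < 1) :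
    mgf (fun ω => Y ω - 1) P t = exp (-t) * (1 - t)⁻¹ := by
  simp_rw [sub_eq_add_neg]
  rw [mgf_add_const, ← mgf_id_map hY.aemeasurable, hdist, mgf_id_expMeasure zero_le_one ht,
    mul_neg_one, mul_comm, one_div, sub_eq_add_neg]

lemma Submartingale.measure_exists_ge_le {μ : Measure Ω} [IsFiniteMeasure μ]
    {𝒢 : Filtration ℕ ‹MeasurableSpace Ω›} {f : ℕ → Ω → ℝ} (hsub : Submartingale f 𝒢 μ)
    (hnonneg : 0 ≤ f) {ε : ℝ} (hε : 0 < ε) (n : ℕ) :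
    μ {ω | ∃ k ≤ n, ε ≤ f k ω} ≤ ENNReal.ofReal ((∫ ω, f n ω ∂μ) / ε) := by
  set A := {ω | (ε.toNNReal : ℝ) ≤
    (Finset.range (n + 1)).sup' Finset.nonempty_range_add_one fun k => f k ω}
  have hsubset : {ω | ∃ k ≤ n, ε ≤ f k ω} ⊆ A := by
    rintro ω ⟨k, hkn, hk⟩
    rw [Set.mem_ofPred_eq, Real.coe_toNNReal _ hε.le]
    exact hk.trans (Finset.le_sup' (fun k => f k ω) (Finset.mem_range_succ_iff.2 hkn))
  have hmax : ε.toNNReal * μ A ≤ ENNReal.ofReal (∫ ω, f n ω ∂μ) :=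
    (maximal_ineq hsub hnonneg n).trans <| ENNReal.ofReal_le_ofReal <|
      setIntegral_le_integral (hsub.integrable n) (ae_of_all _ fun ω => hnonneg n ω)
  rw [ENNReal.ofReal_div_of_pos hε]
  refine (measure_mono hsubset).trans ?_
  rwa [ENNReal.le_div_iff_mul_le (Or.inl (by simpa using hε)) (Or.inl ENNReal.ofReal_ne_top),
    mul_comm]

section PartialSums

variable {P : Measure Ω} {X : ℕ → Ω → ℝ}

lemma iIndepFun.indep_comap_succ_natural (hX : ∀ i, Measurable (X i)) (hindep : iIndepFun X P)
    (j : ℕ) :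
    Indep (MeasurableSpace.comap (X (j + 1)) inferInstance)
      (Filtration.natural X (fun i => (hX i).stronglyMeasurable) j) P := by
  have h := indep_iSup_of_disjoint (fun i => (hX i).comap_le) hindep.iIndep
    (S := {j + 1}) (T := Iic j) (by simp)
  simp only [iSup_singleton] at h
  exact h

variable [IsProbabilityMeasure P] {t : ℝ}

lemma submartingale_exp_mul_sum_Icc (hX : ∀ i, Measurable (X i)) (hindep : iIndepFun X P)
    (hint : ∀ i, Integrable (fun ω => exp (t * X i ω)) P) (hmgf : ∀ i, 1 ≤ mgf (X i) P t) :
    Submartingale (fun j ω => exp (t * ∑ i ∈ Finset.Icc 1 j, X i ω))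
      (Filtration.natural X fun i => (hX i).stronglyMeasurable) P := by
  set 𝒢 := Filtration.natural X fun i => (hX i).stronglyMeasurable
  set f : ℕ → Ω → ℝ := fun j ω => exp (t * ∑ i ∈ Finset.Icc 1 j, X i ω)
  have hf_succ : ∀ j, f (j + 1) = f j * fun ω => exp (t * X (j + 1) ω) := by
    intro j
    ext ω
    simp only [f, Pi.mul_apply, ← exp_add, ← mul_add,
      Finset.sum_Icc_succ_top (Nat.le_add_left 1 j)]
  have hadapted : StronglyAdapted 𝒢 f := by
    intro j
    refine (((Finset.measurable_sum _ fun i hi => ?_).const_mul t).exp).stronglyMeasurable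
    exact ((Filtration.stronglyAdapted_natural _ i).mono
      (𝒢.mono (Finset.mem_Icc.1 hi).2)).measurable
  have hfint : ∀ j, Integrable (f j) P := by
    intro j
    simpa only [Finset.sum_apply] using
      hindep.integrable_exp_mul_sum hX (s := Finset.Icc 1 j) fun i _ => hint i
  refine submartingale_nat hadapted hfint fun j => ?_
  have hpull := condExp_mul_of_stronglyMeasurable_left (m := 𝒢 j) (hadapted j)
    (hf_succ j ▸ hfint (j + 1)) (hint (j + 1))
  have hindep_cond := condExp_indep_eq (hX (j + 1)).comap_le (𝒢.le j)
    ((comap_measurable (X (j + 1))).const_mul t).exp.stronglyMeasurable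
    (hindep.indep_comap_succ_natural hX j)
  rw [hf_succ]
  filter_upwards [hpull, hindep_cond] with ω h1 h2
  rw [h1, Pi.mul_apply, h2]
  exact le_mul_of_one_le_right (exp_pos _).le (hmgf _)

lemma measure_exists_le_mul_sum_Icc_le (hX : ∀ i, Measurable (X i)) (hindep : iIndepFun X P)
    (hint : ∀ i, Integrable (fun ω => exp (t * X i ω)) P) (hmgf : ∀ i, 1 ≤ mgf (X i) P t)
    (n : ℕ) (a : ℝ) :
    P {ω | ∃ j, 1 ≤ j ∧ j ≤ n ∧ a ≤ t * ∑ i ∈ Finset.Icc 1 j, X i ω}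
      ≤ ENNReal.ofReal (exp (-a) * ∏ i ∈ Finset.Icc 1 n, mgf (X i) P t) := by
  have hmax := Submartingale.measure_exists_ge_le
    (submartingale_exp_mul_sum_Icc hX hindep hint hmgf) (fun _ _ => (exp_pos _).le) (exp_pos a) n
  have hmean : ∫ ω, exp (t * ∑ i ∈ Finset.Icc 1 n, X i ω) ∂P
      = ∏ i ∈ Finset.Icc 1 n, mgf (X i) P t := by
    simpa only [mgf, Finset.sum_apply] using hindep.mgf_sum hX (Finset.Icc 1 n)
  refine (measure_mono ?_).trans (hmax.trans_eq ?_)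
  · rintro ω ⟨j, -, hjn, hj⟩
    exact ⟨j, hjn, exp_le_exp.2 hj⟩
  · rw [hmean, exp_neg, div_eq_inv_mul]

end PartialSums

lemma measure_exists_le_mul_sum_Icc_sub_one_le {P : Measure Ω} [IsProbabilityMeasure P]
    {Y : ℕ → Ω → ℝ} (hY : ∀ i, Measurable (Y i)) (hindep : iIndepFun Y P)
    (hdist : ∀ i, P.map (Y i) = expMeasure 1) {t : ℝ} (ht : t ≤ 1 / 2) (n : ℕ) (a : ℝ) :
    P {ω | ∃ j, 1 ≤ j ∧ j ≤ n ∧ a ≤ t * ∑ i ∈ Finset.Icc 1 j, (Y i ω - 1)}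
      ≤ ENNReal.ofReal (exp (2 * n * t ^ 2 - a)) := by
  have ht1 : t < 1 := by linarith
  have hmgf : ∀ i, mgf (fun ω => Y i ω - 1) P t = exp (-t) * (1 - t)⁻¹ :=
    fun i => mgf_sub_one_of_map_eq_expMeasure_one (hY i) (hdist i) ht1
  have hint : ∀ i, Integrable (fun ω => exp (t * (Y i ω - 1))) P := fun i => by
    rw [← mgf_pos_iff, hmgf]
    exact (by norm_num : (0 : ℝ) < 1).trans_le (one_le_exp_neg_mul_inv_one_sub ht1)
  refine (measure_exists_le_mul_sum_Icc_le (fun i => (hY i).sub_const 1)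
    (hindep.comp (fun _ y => y - 1) fun _ => measurable_id.sub_const 1) hint
    (fun i => (hmgf i).symm ▸ one_le_exp_neg_mul_inv_one_sub ht1) n a).trans
    (ENNReal.ofReal_le_ofReal ?_)
  rw [Finset.prod_congr rfl fun i _ => hmgf i, Finset.prod_const, Nat.card_Icc,
    Nat.add_sub_cancel]
  calc exp (-a) * (exp (-t) * (1 - t)⁻¹) ^ n ≤ exp (-a) * exp (2 * t ^ 2) ^ n := by
        gcongr
        exact exp_neg_mul_inv_one_sub_le ht
    _ = exp (2 * n * t ^ 2 - a) := by rw [← exp_nat_mul, ← exp_add]; ring_nf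

end ProbabilityTheory

theorem statement12_general (P : Measure Ω) [IsProbabilityMeasure P] (Y : ℕ → Ω → ℝ)
    (hmeas : ∀ i, Measurable (Y i))
    (hindep : iIndepFun Y P)
    (hdist : ∀ i, Measure.map (Y i) P = expMeasure 1)
    (n : ℕ) (u : ℝ) (hu0 : 0 < u) (hu : u < 2 * Real.sqrt n) :
    P {ω | ∃ j, 1 ≤ j ∧ j ≤ n ∧
        u * Real.sqrt n ≤ |∑ i ∈ Finset.Icc 1 j, (Y i ω - 1)|}
      ≤ ENNReal.ofReal (2 * Real.exp (-(u ^ 2) / 8)) := by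
  set s := √n
  have hs : 0 < s := by linarith
  set lam := u / (4 * s) with hlam_def
  have hlam : 0 < lam := by positivity
  have hlam_le : lam ≤ 1 / 2 := by rw [div_le_iff₀ (by positivity)]; linarith
  have hexponent : 2 * n * lam ^ 2 - lam * (u * s) = -(u ^ 2) / 8 := by
    rw [show (n : ℝ) = s ^ 2 from (sq_sqrt (Nat.cast_nonneg n)).symm, hlam_def]
    field_simp
    ring
  set E := fun t : ℝ => {ω | ∃ j, 1 ≤ j ∧ j ≤ n ∧
    lam * (u * s) ≤ t * ∑ i ∈ Finset.Icc 1 j, (Y i ω - 1)}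
  have hsubset : {ω | ∃ j, 1 ≤ j ∧ j ≤ n ∧ u * s ≤ |∑ i ∈ Finset.Icc 1 j, (Y i ω - 1)|}
      ⊆ E lam ∪ E (-lam) := by
    rintro ω ⟨j, hj1, hjn, hj⟩
    rcases le_abs.1 hj with h | h
    · exact Or.inl ⟨j, hj1, hjn, by nlinarith⟩
    · exact Or.inr ⟨j, hj1, hjn, by nlinarith⟩
  have hE : ∀ t, t ^ 2 = lam ^ 2 → t ≤ 1 / 2 →
      P (E t) ≤ ENNReal.ofReal (exp (-(u ^ 2) / 8)) := by
    intro t ht2 ht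
    simpa only [ht2, hexponent] using
      measure_exists_le_mul_sum_Icc_sub_one_le hmeas hindep hdist ht n (lam * (u * s))
  calc P _ ≤ P (E lam ∪ E (-lam)) := measure_mono hsubset
    _ ≤ P (E lam) + P (E (-lam)) := measure_union_le _ _
    _ ≤ ENNReal.ofReal (exp (-(u ^ 2) / 8)) + ENNReal.ofReal (exp (-(u ^ 2) / 8)) :=
        add_le_add (hE lam rfl hlam_le) (hE (-lam) (neg_sq lam) (by linarith))
    _ = ENNReal.ofReal (2 * exp (-(u ^ 2) / 8)) := by
        rw [← ENNReal.ofReal_add (exp_pos _).le (exp_pos _).le, two_mul]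

/-- If `Y 1, Y 2, …` are i.i.d. exponential(1) random variables, then for every integer `n ≥ 1`
and real `0 < u < 2√n`,
`P(max_{1≤j≤n} |Σ_{i=1}^j (Y_i − 1)| ≥ u √n) ≤ 2 exp(−u²/8)`. -/
theorem statement12 (P : Measure Ω) [IsProbabilityMeasure P] (Y : ℕ → Ω → ℝ)
    (hmeas : ∀ i, Measurable (Y i))
    (hindep : iIndepFun Y P)
    (hdist : ∀ i, Measure.map (Y i) P = expMeasure 1)
    (n : ℕ) (hn : 1 ≤ n) (u : ℝ) (hu0 : 0 < u) (hu : u < 2 * Real.sqrt n) :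
    P {ω | ∃ j, 1 ≤ j ∧ j ≤ n ∧
        u * Real.sqrt n ≤ |∑ i ∈ Finset.Icc 1 j, (Y i ω - 1)|}
      ≤ ENNReal.ofReal (2 * Real.exp (-(u ^ 2) / 8)) :=
  statement12_general P Y hmeas hindep hdist n u hu0 hu
end
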